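/- Every branch point of the hierarchy Γ_k(X) is a layer point of Γ_k(X). -/

import Mathlib

variable {Z : Type*} [MetricSpace Z]

/-- Vertex set `V_{s,k}(X)` of the degree-Rips complex: points of `X` having at
least `k` other points of `X` within distance `s`. -/
def drVertex (X : Set Z) (k : ℕ) (s : ℝ) : Set Z :=
  {x ∈ X | k ≤ {y ∈ X | y ≠ x ∧ dist x y ≤ s}.ncard}

/-- The generating relation for components: two vertices at distance at most `s`. -/
def drStep (X : Set Z) (k : ℕ) (s : ℝ) (x y : Z) : Prop :=
  x ∈ drVertex X k s ∧ y ∈ drVertex X k s ∧ dist x y ≤ s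

/-- `C` is a degree-Rips component (an element of `π₀ L_{s,k}(X)`): the class of
some vertex `x` under the equivalence relation generated by `drStep`. -/
def drComp (X : Set Z) (k : ℕ) (s : ℝ) (C : Set Z) : Prop :=
  ∃ x ∈ drVertex X k s, C = {y | Relation.ReflTransGen (drStep X k s) x y}

/-- `(t, C)` is a layer point of `Γ_k(X)`: it is an element of the hierarchy, and
every element `(s, D) ≤ (t, C)` with `s < t` has `D` a proper subset of `C`. -/
def IsLayer (X : Set Z) (k : ℕ) (t : ℝ) (C : Set Z) : Prop :=
  0 ≤ t ∧ drComp X k t C ∧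
    ∀ s D, 0 ≤ s → drComp X k s D → s < t → D ⊆ C → D ⊂ C

/-- `(t, C)` is a branch point of `Γ_k(X)`. -/
def IsBranch (X : Set Z) (k : ℕ) (t : ℝ) (C : Set Z) : Prop :=
  0 ≤ t ∧ drComp X k t C ∧
    ((∀ s D, 0 ≤ s → drComp X k s D → s < t → ¬D ⊆ C) ∨
      ∃ s₀, s₀ < t ∧ ∀ s, s₀ ≤ s → s < t →
        ∃ D₁ D₂, drComp X k s D₁ ∧ drComp X k s D₂ ∧ D₁ ≠ D₂ ∧ D₁ ⊆ C ∧ D₂ ⊆ C)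

/-- `(t, D)` is the maximal layer point below the element `(u, C)` of `Γ_k(X)`:
it is a layer point, `(t, D) ≤ (u, C)`, and every layer point below `(u, C)`
is below `(t, D)`. -/
def IsMaxLayerBelow (X : Set Z) (k : ℕ) (u : ℝ) (C : Set Z) (t : ℝ) (D : Set Z) : Prop :=
  IsLayer X k t D ∧ t ≤ u ∧ D ⊆ C ∧
    ∀ t' D', IsLayer X k t' D' → t' ≤ u → D' ⊆ C → t' ≤ t ∧ D' ⊆ D

/-- `t` is a layer parameter of `X`. -/
def IsLayerParam (X : Set Z) (k : ℕ) (t : ℝ) : Prop :=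
  ∃ C, IsLayer X k t C

/-- A stability map `θ : Y → X` (encoded as a map `Z → Z` carrying `Y` into `X`). -/
def IsStabilityMap (X Y : Set Z) (k : ℕ) (r : ℝ) (θ : Z → Z) : Prop :=
  (∀ y ∈ Y, θ y ∈ X) ∧
    ∀ s : ℝ, 0 ≤ s →
      (∀ y₁ y₂, y₁ ∈ drVertex Y k s → y₂ ∈ drVertex Y k s → dist y₁ y₂ ≤ s →
          θ y₁ ∈ drVertex X k (s + 2 * r) ∧ θ y₂ ∈ drVertex X k (s + 2 * r) ∧
          dist (θ y₁) (θ y₂) ≤ s + 2 * r) ∧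
      (∀ x ∈ drVertex X k s, ∃ C, drComp X k (s + 2 * r) C ∧ x ∈ C ∧ θ x ∈ C) ∧
      (∀ y ∈ drVertex Y k s, ∃ D, drComp Y k (s + 2 * r) D ∧ y ∈ D ∧ θ y ∈ D)

/-- Vertices of the degree-Rips complex at scale infinity: points with at least
`k` other points. -/
def drVertexInf (W : Set Z) (k : ℕ) : Set Z :=
  {w ∈ W | k ≤ {w' ∈ W | w' ≠ w}.ncard}

/-- Phase change numbers: distances between distinct vertices at scale infinity. -/
def IsPhaseChange (W : Set Z) (k : ℕ) (t : ℝ) : Prop :=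
  ∃ w₁ ∈ drVertexInf W k, ∃ w₂ ∈ drVertexInf W k, w₁ ≠ w₂ ∧ t = dist w₁ w₂

section DegreeRips

variable {X : Set Z} {k : ℕ} {s s' : ℝ}

lemma drVertex_mono (hX : X.Finite) : Monotone (drVertex X k) := by
  rintro s s' hss x ⟨hx, hk⟩
  refine ⟨hx, hk.trans (Set.ncard_le_ncard ?_ (hX.subset (Set.sep_subset _ _)))⟩
  rintro y ⟨hy, hne, hd⟩
  exact ⟨hy, hne, hd.trans hss⟩

lemma drStep_mono (hX : X.Finite) (hss : s ≤ s') {x y : Z} (h : drStep X k s x y) :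
    drStep X k s' x y :=
  ⟨drVertex_mono hX hss h.1, drVertex_mono hX hss h.2.1, h.2.2.trans hss⟩

instance drStep.instSymm (X : Set Z) (k : ℕ) (s : ℝ) : Std.Symm (drStep X k s) where
  symm _ _ := fun ⟨hx, hy, hd⟩ => ⟨hy, hx, by rwa [dist_comm]⟩

lemma drComp.nonempty {D : Set Z} (hD : drComp X k s D) : D.Nonempty := by
  obtain ⟨x, -, rfl⟩ := hD
  exact ⟨x, .refl⟩

lemma drComp.subset_of_mem (hX : X.Finite) {D D' : Set Z} (hD : drComp X k s D)
    (hD' : drComp X k s' D') (hss : s ≤ s') {y : Z} (hyD : y ∈ D) (hyD' : y ∈ D') :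
    D ⊆ D' := by
  obtain ⟨x, -, rfl⟩ := hD
  obtain ⟨x', -, rfl⟩ := hD'
  have lift : ∀ {a b}, Relation.ReflTransGen (drStep X k s) a b →
      Relation.ReflTransGen (drStep X k s') a b :=
    Relation.ReflTransGen.mono (fun _ _ => drStep_mono hX hss) _ _
  intro z hz
  exact hyD'.trans ((symm (lift hyD)).trans (lift hz))

end DegreeRips

/-- every branch point of `Γ_k(X)` is a layer point of `Γ_k(X)`. -/
theorem branch_point_is_layer_point (X : Set Z) (hXfin : X.Finite) (k : ℕ)
    (t : ℝ) (C : Set Z) (h : IsBranch X k t C) : IsLayer X k t C := by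
  obtain ⟨ht, hC, hbranch⟩ := h
  refine ⟨ht, hC, fun s D hs hD hst hDC => ⟨hDC, fun hCD => ?_⟩⟩
  rcases hbranch with hnone | ⟨s₀, hs₀, hsplit⟩
  · exact hnone s D hs hD hst hDC
  · obtain ⟨D₁, D₂, hD₁, hD₂, hne, hD₁C, hD₂C⟩ :=
      hsplit (max s s₀) (le_max_right _ _) (max_lt hst hs₀)
    -- Since `D = C`, every component at scale `max s s₀` inside `C` contains `D`, hence equals it.
    have eq_D : ∀ E, drComp X k (max s s₀) E → E ⊆ C → E = D := fun E hE hEC => by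
      obtain ⟨y, hyE⟩ := hE.nonempty
      exact (hEC.trans hCD).antisymm
        (hD.subset_of_mem hXfin hE (le_max_left _ _) (hCD (hEC hyE)) hyE)
    exact hne ((eq_D D₁ hD₁ hD₁C).trans (eq_D D₂ hD₂ hD₂C).symm)
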